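/- arXiv:1804.06240 — 3 statements merged into one kernel-verified Lean document; each statement's English description precedes it below -/
import Mathlib

section
/- In the group G_2 = ⟨x, y | x y^{-1} x^{-1} y x = y^{-2} x y x^{-1} y^{-1} x y^2⟩, the defining relation is equivalent to [x,y]^2 ([x,y]^2)^y = 1 modulo the second derived subgroup G_2''. That is, in the metabelianization G_2/G_2'', the relation becomes [x,y]^2 · y^{-1}[x,y]^2 y = 1. -/
/- STATEMENT 1: In `G₂ = ⟨x, y | x y⁻¹ x⁻¹ y x = y⁻² x y x⁻¹ y⁻¹ x y²⟩`, the defining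
   relation is equivalent, modulo the second derived subgroup, to the relation
   `[x,y]² ([x,y]²)^y = 1` (with `[a,b] = a⁻¹b⁻¹ab`, `a^b = b⁻¹ a b`):
   the normal closures of the two relators agree modulo the second derived subgroup of
   the free group, and in the metabelianization `G₂/G₂''` the word `[x,y]² y⁻¹[x,y]² y`
   becomes trivial. -/

namespace Stmt1

abbrev F := FreeGroup (Fin 2)

def x : F := FreeGroup.of 0
def y : F := FreeGroup.of 1

/-- The relator of `x y⁻¹ x⁻¹ y x = y⁻² x y x⁻¹ y⁻¹ x y²`. -/
def R : F :=
  x * y⁻¹ * x⁻¹ * y * x * (y⁻¹ * y⁻¹ * x * y * x⁻¹ * y⁻¹ * x * y * y)⁻¹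

/-- The commutator `[x,y] = x⁻¹ y⁻¹ x y`. -/
def c : F := x⁻¹ * y⁻¹ * x * y

/-- The word `[x,y]² ([x,y]²)^y`. -/
def w : F := c ^ 2 * (y⁻¹ * c ^ 2 * y)

abbrev G2 := PresentedGroup ({R} : Set F)

/-! Modulo `F''` the relator `R` is a conjugate of `w⁻¹`: the defect `x w x⁻¹ R` is a product of
commutators of the elements `⁅y⁻¹, x⁆` and `⁅y⁻², x⁆` of `F'`. Relators that are conjugate up to
inversion modulo a normal subgroup `N` have the same normal closure modulo `N`; and since
`F''` maps into `G₂''`, the word `w` dies in `G₂/G₂''`. -/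

open scoped commutatorElement

section NormalClosure

variable {G : Type*} [Group G] {N : Subgroup G} [N.Normal]

theorem mem_normalClosure_sup_of_conj_mul_mem {r s : G} (g : G) (h : g * s * g⁻¹ * r ∈ N) :
    s ∈ Subgroup.normalClosure {r} ⊔ N := by
  have hr : r ∈ Subgroup.normalClosure {r} ⊔ N :=
    Subgroup.mem_sup_left (Subgroup.subset_normalClosure rfl)
  have hconj : g * s * g⁻¹ ∈ Subgroup.normalClosure {r} ⊔ N := by
    simpa using mul_mem (Subgroup.mem_sup_right h) (inv_mem hr)
  simpa [mul_assoc] using (Subgroup.sup_normal _ _).conj_mem _ hconj g⁻¹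

theorem normalClosure_sup_eq_of_conj_mul_mem {r s : G} (g : G) (h : g * s * g⁻¹ * r ∈ N) :
    Subgroup.normalClosure {r} ⊔ N = Subgroup.normalClosure {s} ⊔ N := by
  have h' : g⁻¹ * r * g⁻¹⁻¹ * s ∈ N := by
    simpa [mul_assoc] using ‹N.Normal›.conj_mem _ (‹N.Normal›.mem_comm h) g⁻¹
  refine le_antisymm (sup_le ?_ le_sup_right) (sup_le ?_ le_sup_right) <;>
    refine Subgroup.normalClosure_le_normal (Set.singleton_subset_iff.2 ?_)
  exacts [mem_normalClosure_sup_of_conj_mul_mem _ h', mem_normalClosure_sup_of_conj_mul_mem _ h]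

end NormalClosure

theorem normalClosure_sup_derivedSeries_le_comap {G H : Type*} [Group G] [Group H] (f : G →* H)
    {r : G} (hr : f r = 1) (n : ℕ) :
    Subgroup.normalClosure {r} ⊔ derivedSeries G n ≤ (derivedSeries H n).comap f :=
  sup_le
    (Subgroup.normalClosure_le_normal (Set.singleton_subset_iff.2 (by simp [hr, one_mem])))
    (Subgroup.map_le_iff_le_comap.1 (map_derivedSeries_le_derivedSeries f n))

theorem commutator_mem_derivedSeries_succ {G : Type*} [Group G] {n : ℕ} {a b : G}
    (ha : a ∈ derivedSeries G n) (hb : b ∈ derivedSeries G n) :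
    ⁅a, b⁆ ∈ derivedSeries G (n + 1) :=
  Subgroup.commutator_mem_commutator ha hb

theorem conj_w_mul_R_mem_derivedSeries_two : x * w * x⁻¹ * R ∈ derivedSeries F 2 := by
  have ha : ⁅y⁻¹, x⁆ ∈ derivedSeries F 1 := commutator_mem_derivedSeries_succ trivial trivial
  have hb : ⁅y⁻¹ * y⁻¹, x⁆ ∈ derivedSeries F 1 := commutator_mem_derivedSeries_succ trivial trivial
  have hd : x * w * x⁻¹ * R =
      ⁅⁅y⁻¹, x⁆, ⁅y⁻¹ * y⁻¹, x⁆⁆ * ⁅⁅y⁻¹ * y⁻¹, x⁆, ⁅y⁻¹ * y⁻¹, x⁆ * ⁅y⁻¹, x⁆⁻¹⁆ := by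
    decide
  rw [hd]
  exact mul_mem (commutator_mem_derivedSeries_succ ha hb)
    (commutator_mem_derivedSeries_succ hb (mul_mem hb (inv_mem ha)))

theorem relation_metabelian :
    (Subgroup.normalClosure ({R} : Set F) ⊔ derivedSeries F 2 =
      Subgroup.normalClosure ({w} : Set F) ⊔ derivedSeries F 2) ∧
    (haveI : (derivedSeries G2 2).Normal := derivedSeries_normal _ _
     (QuotientGroup.mk' (derivedSeries G2 2)) (PresentedGroup.mk _ w) = 1) := by
  have hR := conj_w_mul_R_mem_derivedSeries_two
  refine ⟨normalClosure_sup_eq_of_conj_mul_mem x hR, (QuotientGroup.eq_one_iff _).2 ?_⟩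
  exact normalClosure_sup_derivedSeries_le_comap (PresentedGroup.mk ({R} : Set F))
    (PresentedGroup.one_of_mem rfl) 2 (mem_normalClosure_sup_of_conj_mul_mem x hR)

end Stmt1
end

section
/- For any group G such that the abelianization of the commutator subgroup quotient γ_2(G)/γ_3(G) has exponent dividing 4, every quotient γ_k(G)/γ_{k+1}(G) for k ≥ 2 has exponent dividing 4, provided γ_2(G)/γ_3(G) has exponent dividing 4. More precisely: if g^4 ∈ γ_3(G) for all g ∈ γ_2(G), then for all k ≥ 2 and all h ∈ γ_k(G), h^4 ∈ γ_{k+1}(G). -/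
/-!
Modulo `γ_{k+2}`, every commutator `⁅x, y⁆` with `x ∈ γ_k` is central, so `⁅x, y⁆ ^ n = ⁅x ^ n, y⁆`,
which vanishes once `x ^ n ∈ γ_{k+1}`. These commutators generate `γ_{k+1}`, whose image modulo
`γ_{k+2}` is central and hence abelian, so `g ^ n ∈ γ_{k+2}` for every `g ∈ γ_{k+1}`. Induction on
`k` propagates the exponent from `γ₂/γ₃` to all later factors.
-/

open scoped commutatorElement

theorem commutatorElement_pow_left_of_commute {G : Type*} [Group G] {a b : G}
    (h : Commute a ⁅a, b⁆) (n : ℕ) : ⁅a ^ n, b⁆ = ⁅a, b⁆ ^ n := by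
  induction n with
  | zero => simp
  | succ n ih =>
    calc ⁅a ^ (n + 1), b⁆ = a * ⁅a ^ n, b⁆ * a⁻¹ * ⁅a, b⁆ := by
          simp only [pow_succ', commutatorElement_def]; group
      _ = ⁅a, b⁆ ^ (n + 1) := by rw [ih, (h.pow_right n).eq, mul_inv_cancel_right, pow_succ]

theorem pow_eq_one_of_mem_closure_of_subset_center {Q : Type*} [Group Q] {S : Set Q} {n : ℕ}
    (hS : S ⊆ Subgroup.center Q) (hpow : ∀ x ∈ S, x ^ n = 1) :
    ∀ g ∈ Subgroup.closure S, g ^ n = 1 := by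
  intro g hg
  induction hg using Subgroup.closure_induction with
  | mem x hx => exact hpow x hx
  | one => exact one_pow n
  | mul a b ha _ iha ihb =>
    have hab : Commute a b :=
      (Subgroup.mem_center_iff.mp ((Subgroup.closure_le _).mpr hS ha) b).symm
    rw [hab.mul_pow, iha, ihb, one_mul]
  | inv a _ iha => rw [inv_pow, iha, inv_one]

namespace Subgroup

variable {G : Type*} [Group G]

theorem commutatorElement_mem_lowerCentralSeries_succ {k : ℕ} {x : G}
    (hx : x ∈ (⊤ : Subgroup G).lowerCentralSeries k) (y : G) :
    ⁅x, y⁆ ∈ (⊤ : Subgroup G).lowerCentralSeries (k + 1) :=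
  commutator_mem_commutator hx (mem_top y)

theorem mk_mem_center_of_mem_lowerCentralSeries {k : ℕ} {x : G}
    (hx : x ∈ (⊤ : Subgroup G).lowerCentralSeries k) :
    (x : G ⧸ (⊤ : Subgroup G).lowerCentralSeries (k + 1)) ∈
      center (G ⧸ (⊤ : Subgroup G).lowerCentralSeries (k + 1)) := by
  rw [mem_center_iff]
  intro z
  obtain ⟨y, rfl⟩ := QuotientGroup.mk_surjective z
  rw [← commutatorElement_eq_one_iff_mul_comm, ← commutatorElement_inv, inv_eq_one,
    ← QuotientGroup.mk'_apply, ← QuotientGroup.mk'_apply, ← map_commutatorElement,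
    QuotientGroup.mk'_apply, QuotientGroup.eq_one_iff]
  exact commutatorElement_mem_lowerCentralSeries_succ hx y

theorem pow_mem_lowerCentralSeries_succ_succ {n k : ℕ}
    (h : ∀ g ∈ (⊤ : Subgroup G).lowerCentralSeries k,
      g ^ n ∈ (⊤ : Subgroup G).lowerCentralSeries (k + 1)) :
    ∀ g ∈ (⊤ : Subgroup G).lowerCentralSeries (k + 1),
      g ^ n ∈ (⊤ : Subgroup G).lowerCentralSeries (k + 2) := by
  set N := (⊤ : Subgroup G).lowerCentralSeries (k + 2)
  set T := {c | ∃ x ∈ (⊤ : Subgroup G).lowerCentralSeries k, ∃ y ∈ (⊤ : Subgroup G), ⁅x, y⁆ = c}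
  have hT_center : QuotientGroup.mk' N '' T ⊆ center (G ⧸ N) := by
    rintro _ ⟨_, ⟨x, hx, y, -, rfl⟩, rfl⟩
    exact mk_mem_center_of_mem_lowerCentralSeries
      (commutatorElement_mem_lowerCentralSeries_succ hx y)
  have hT_pow : ∀ c ∈ QuotientGroup.mk' N '' T, c ^ n = 1 := by
    rintro _ ⟨_, ⟨x, hx, y, -, rfl⟩, rfl⟩
    have hcomm :
        Commute (QuotientGroup.mk' N x) ⁅QuotientGroup.mk' N x, QuotientGroup.mk' N y⁆ := by
      refine mem_center_iff.mp ?_ _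
      rw [← map_commutatorElement]
      exact hT_center ⟨_, ⟨x, hx, y, mem_top y, rfl⟩, rfl⟩
    rw [map_commutatorElement, ← commutatorElement_pow_left_of_commute hcomm, ← map_pow,
      ← map_commutatorElement, QuotientGroup.mk'_apply, QuotientGroup.eq_one_iff]
    exact commutatorElement_mem_lowerCentralSeries_succ (h x hx) y
  intro g hg
  rw [← QuotientGroup.eq_one_iff, ← QuotientGroup.mk'_apply, map_pow]
  refine pow_eq_one_of_mem_closure_of_subset_center hT_center hT_pow _ ?_
  rw [← MonoidHom.map_closure]
  exact mem_map_of_mem _ hg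

end Subgroup

theorem exponent_four_propagates (G : Type*) [Group G]
    (h4 : ∀ g ∈ (⊤ : Subgroup G).lowerCentralSeries 1, g ^ 4 ∈ (⊤ : Subgroup G).lowerCentralSeries 2) :
    ∀ k : ℕ, 2 ≤ k → ∀ h ∈ (⊤ : Subgroup G).lowerCentralSeries (k - 1),
      h ^ 4 ∈ (⊤ : Subgroup G).lowerCentralSeries k := by
  have h4_succ : ∀ m : ℕ, ∀ g ∈ (⊤ : Subgroup G).lowerCentralSeries (m + 1),
      g ^ 4 ∈ (⊤ : Subgroup G).lowerCentralSeries (m + 2) := by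
    intro m
    induction m with
    | zero => exact h4
    | succ m ih => exact Subgroup.pow_mem_lowerCentralSeries_succ_succ ih
  intro k hk
  obtain ⟨m, rfl⟩ : ∃ m, k = m + 2 := ⟨k - 2, by omega⟩
  exact h4_succ m
end

section
/- The vector (a + d - ad, 1 + cd + c^2 d, d - c^2 d - c^2 a + c^2 a^2) of elements of the Laurent polynomial ring Z[a^{±1}, c^{±1}, d^{±1}] is not unimodular: the ideal generated by these three elements does not contain 1. -/
/-!
A ring homomorphism to a nonzero ring that kills the three entries kills the ideal they span,
so it suffices to find a common zero of the entries with all three coordinates invertible.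
Take `c` a root of `c³ = c² + c + 1` (in `ℂ`, say), `a = 1/(c² + c + 1)` and `d = -1/(c² + c)`.
These are invertible as soon as `2` is: `c² + c + 1 = c³`, and `c² + c = c (c + 1)` with
`(c + 1)(c - 1)² = 2`.
-/

namespace Stmt16

abbrev L := AddMonoidAlgebra ℤ (ℤ × ℤ × ℤ)

noncomputable def m (p : ℤ × ℤ × ℤ) : L := AddMonoidAlgebra.single p 1

noncomputable def a : L := m (1, 0, 0)
noncomputable def c : L := m (0, 1, 0)
noncomputable def d : L := m (0, 0, 1)

theorem one_notMem_span_of_map_eq_zero {R S : Type*} [CommRing R] [Semiring S] [Nontrivial S]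
    (ψ : R →+* S) {s : Set R} (hs : ∀ x ∈ s, ψ x = 0) : (1 : R) ∉ Ideal.span s := fun h =>
  one_ne_zero (α := S) <| by simpa using (Ideal.span_le (I := RingHom.ker ψ)).2 hs h

section Evaluation

variable {S : Type*} [CommRing S]

def monomialEval (A C D : Sˣ) : Multiplicative (ℤ × ℤ × ℤ) →* S :=
  (Units.coeHom S).comp
    { toFun := fun x => A ^ x.toAdd.1 * C ^ x.toAdd.2.1 * D ^ x.toAdd.2.2
      map_one' := by simp
      map_mul' := fun x y => by
        simp only [toAdd_mul, Prod.fst_add, Prod.snd_add, zpow_add]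
        ac_rfl }

noncomputable def laurentEval (A C D : Sˣ) : L →+* S :=
  (AddMonoidAlgebra.lift ℤ S (ℤ × ℤ × ℤ) (monomialEval A C D)).toRingHom

variable (A C D : Sˣ)

@[simp] theorem laurentEval_a : laurentEval A C D a = A := by
  simp [laurentEval, monomialEval, a, m, AddMonoidAlgebra.lift_single]

@[simp] theorem laurentEval_c : laurentEval A C D c = C := by
  simp [laurentEval, monomialEval, c, m, AddMonoidAlgebra.lift_single]

@[simp] theorem laurentEval_d : laurentEval A C D d = D := by
  simp [laurentEval, monomialEval, d, m, AddMonoidAlgebra.lift_single]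

end Evaluation

section Cubic

variable {S : Type*} [CommRing S] {C : S}

theorem isUnit_of_cubic (hC : C ^ 3 = C ^ 2 + C + 1) : IsUnit C :=
  IsUnit.of_mul_eq_one (C ^ 2 - C - 1) (by linear_combination hC)

theorem isUnit_add_one_of_cubic (h2 : IsUnit (2 : S)) (hC : C ^ 3 = C ^ 2 + C + 1) :
    IsUnit (C + 1) :=
  isUnit_of_mul_isUnit_left (y := (C - 1) ^ 2) <| by
    convert h2 using 1
    linear_combination hC

theorem entries_eq_zero_of_cubic {A D : S} (hC : C ^ 3 = C ^ 2 + C + 1)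
    (hA : A * (C ^ 2 + C + 1) = 1) (hD : D * (C ^ 2 + C) = -1) :
    A + D - A * D = 0 ∧ 1 + C * D + C ^ 2 * D = 0 ∧
      D - C ^ 2 * D - C ^ 2 * A + C ^ 2 * A ^ 2 = 0 := by
  refine ⟨by linear_combination A * hD - D * hA, by linear_combination hD, ?_⟩
  have hAC : A * C ^ 3 = 1 := by linear_combination hA + A * hC
  -- `A = C⁻³`, so this is `C⁻⁴ (2C³ - C⁴ - 1)`, and `C⁴ - 2C³ + 1 = (C - 1)(C³ - C² - C - 1)`
  have hX : -1 + 2 * C ^ 2 * A - C ^ 2 * A ^ 2 = 0 := by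
    linear_combination (-(C - 1) * A ^ 2 * C ^ 2) * hC +
      (A ^ 2 * C ^ 2 * (2 * C ^ 3 - A * C ^ 3 - 1) -
        (-1 + 2 * C ^ 2 * A - C ^ 2 * A ^ 2) * (A * C ^ 3 + 1)) * hAC
  linear_combination
    (D - C ^ 2 * D - C ^ 2 * A + C ^ 2 * A ^ 2 - D * (1 - C ^ 2)) * hD -
      D * (C ^ 2 * A - C ^ 2) * hA - D * hX

theorem exists_units_entries_eq_zero_of_cubic (h2 : IsUnit (2 : S))
    (hC : C ^ 3 = C ^ 2 + C + 1) :
    ∃ A C D : Sˣ, (A + D - A * D : S) = 0 ∧ (1 + C * D + C ^ 2 * D : S) = 0 ∧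
      (D - C ^ 2 * D - C ^ 2 * A + C ^ 2 * A ^ 2 : S) = 0 := by
  have hC₀ := isUnit_of_cubic hC
  have hu : IsUnit (C ^ 2 + C + 1) := hC ▸ hC₀.pow 3
  have hv : IsUnit (C ^ 2 + C) := by
    rw [show C ^ 2 + C = C * (C + 1) by ring]
    exact hC₀.mul (isUnit_add_one_of_cubic h2 hC)
  refine ⟨hu.unit⁻¹, hC₀.unit, -hv.unit⁻¹, entries_eq_zero_of_cubic hC ?_ ?_⟩
  · simp
  · simp

end Cubic

theorem not_unimodular :
    (1 : L) ∉ Ideal.span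
      ({a + d - a * d, 1 + c * d + c ^ 2 * d,
        d - c ^ 2 * d - c ^ 2 * a + c ^ 2 * a ^ 2} : Set L) := by
  obtain ⟨z, hz⟩ : ∃ z : ℂ, z ^ 3 = z ^ 2 + z + 1 := by
    open Polynomial in
    have hdeg : (X ^ 3 - X ^ 2 - X - 1 : ℂ[X]).degree = 3 := by compute_degree!
    obtain ⟨z, hz⟩ := Complex.exists_root (f := X ^ 3 - X ^ 2 - X - 1) (by rw [hdeg]; decide)
    exact ⟨z, by simp at hz; linear_combination hz⟩
  obtain ⟨A, C, D, h₁, h₂, h₃⟩ := exists_units_entries_eq_zero_of_cubic two_ne_zero.isUnit hz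
  exact one_notMem_span_of_map_eq_zero (laurentEval A C D) <| by
    rintro _ (rfl | rfl | rfl) <;> simpa

end Stmt16
end
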